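/- Let s > 0, t > 0, and let μ be a finite positive Borel measure on the open unit ball B_n of ℂ^n such that M := sup_{a ∈ B_n} ∫_{B_n} (1-|a|²)^t / |1 - ⟨a,z⟩|^{ns+t} dμ(z) < ∞. Then there is a constant C (depending only on n, s, t) such that μ(B_δ(ζ)) ≤ C · M · δ^{ns} for all ζ on the unit sphere and all δ ∈ (0, 1]. -/

import Mathlib

open MeasureTheory
open scoped ENNReal

/-- The Euclidean norm on `ℂⁿ`. -/
noncomputable def eNorm {n : ℕ} (z : Fin n → ℂ) : ℝ :=
  Real.sqrt (∑ i, ‖z i‖ ^ 2)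

/-- The standard Hermitian inner product `⟨z,w⟩ = ∑ z_j conj(w_j)` on `ℂⁿ`. -/
noncomputable def hInner {n : ℕ} (z w : Fin n → ℂ) : ℂ :=
  ∑ i, z i * (starRingEnd ℂ) (w i)

/-!
Test the hypothesis at the point `a = (1 - δ) ζ`. There `1 - |a|² ≥ δ`, and on `B_δ(ζ)` one has
`0 < |1 - ⟨a, z⟩| ≤ 3δ`, so the integrand is at least `δ^t / (3δ)^(ns+t) = (3^(ns+t) δ^(ns))⁻¹`
on `B_δ(ζ)`; integrating gives `μ(B_δ(ζ)) ≤ 3^(ns+t) M δ^(ns)`.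
-/

section ComplexEstimates

variable {w : ℂ} {δ : ℝ}

lemma norm_lt_one_add_of_norm_one_sub_lt (hw : ‖1 - w‖ < δ) : ‖w‖ < 1 + δ :=
  calc ‖w‖ ≤ ‖(1 : ℂ)‖ + ‖1 - w‖ := norm_sub_rev w 1 ▸ norm_le_norm_add_norm_sub' w 1
    _ < 1 + δ := by rw [norm_one]; linarith

lemma norm_one_sub_mul_pos (hδ : 0 < δ) (hδ1 : δ ≤ 1) (hw : ‖1 - w‖ < δ) :
    0 < ‖1 - ((1 - δ : ℝ) : ℂ) * w‖ := by
  have hsmall : ‖((1 - δ : ℝ) : ℂ) * w‖ < 1 := by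
    rw [norm_mul, Complex.norm_real, Real.norm_of_nonneg (by linarith)]
    nlinarith [norm_lt_one_add_of_norm_one_sub_lt hw]
  refine norm_pos_iff.mpr (sub_ne_zero.mpr fun h => ?_)
  rw [← h, norm_one] at hsmall
  exact lt_irrefl 1 hsmall

lemma norm_one_sub_mul_le (hδ : 0 < δ) (hδ1 : δ ≤ 1) (hw : ‖1 - w‖ < δ) :
    ‖1 - ((1 - δ : ℝ) : ℂ) * w‖ ≤ 3 * δ := by
  have hδw : ‖(δ : ℂ) * w‖ ≤ δ * (1 + δ) := by
    rw [norm_mul, Complex.norm_real, Real.norm_of_nonneg hδ.le]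
    exact mul_le_mul_of_nonneg_left (norm_lt_one_add_of_norm_one_sub_lt hw).le hδ.le
  calc ‖1 - ((1 - δ : ℝ) : ℂ) * w‖ = ‖(1 - w) + (δ : ℂ) * w‖ := by push_cast; ring_nf
    _ ≤ ‖1 - w‖ + ‖(δ : ℂ) * w‖ := norm_add_le _ _
    _ ≤ 3 * δ := by nlinarith

end ComplexEstimates

section Ball

variable {n : ℕ}

lemma eNorm_eq_norm_toLp (z : Fin n → ℂ) :
    eNorm z = ‖(WithLp.toLp 2 z : EuclideanSpace ℂ (Fin n))‖ := by
  rw [EuclideanSpace.norm_eq]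
  rfl

lemma continuous_eNorm : Continuous (eNorm (n := n)) := by
  simp only [funext eNorm_eq_norm_toLp]
  exact continuous_norm.comp (PiLp.continuous_toLp 2 _)

lemma continuous_hInner_left (w : Fin n → ℂ) : Continuous fun z => hInner z w := by
  unfold hInner
  fun_prop

lemma eNorm_smul (c : ℂ) (z : Fin n → ℂ) : eNorm (c • z) = ‖c‖ * eNorm z := by
  rw [eNorm_eq_norm_toLp, eNorm_eq_norm_toLp, WithLp.toLp_smul, norm_smul]

lemma norm_one_sub_hInner_ofReal_smul (r : ℝ) (ζ z : Fin n → ℂ) :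
    ‖1 - hInner ((r : ℂ) • ζ) z‖ = ‖1 - (r : ℂ) * hInner z ζ‖ := by
  have h : 1 - hInner ((r : ℂ) • ζ) z = starRingEnd ℂ (1 - (r : ℂ) * hInner z ζ) := by
    simp only [hInner, Pi.smul_apply, smul_eq_mul, map_sub, map_one, map_mul, map_sum,
      Complex.conj_conj, Complex.conj_ofReal, Finset.mul_sum]
    exact congrArg _ (Finset.sum_congr rfl fun i _ => by ring)
  rw [h, Complex.norm_conj]

lemma isOpen_setOf_eNorm_lt_one_and_norm_one_sub_hInner_lt (ζ : Fin n → ℂ) (δ : ℝ) :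
    IsOpen {z : Fin n → ℂ | eNorm z < 1 ∧ ‖1 - hInner z ζ‖ < δ} :=
  (isOpen_lt continuous_eNorm continuous_const).inter
    (isOpen_lt (continuous_const.sub (continuous_hInner_left ζ)).norm continuous_const)

end Ball

lemma inv_le_rpow_div_rpow {δ x y p t : ℝ} (hδ : 0 < δ) (hp : 0 ≤ p) (ht : 0 ≤ t)
    (hx : δ ≤ x) (hy : 0 < y) (hyδ : y ≤ 3 * δ) :
    (3 ^ (p + t) * δ ^ p)⁻¹ ≤ x ^ t / y ^ (p + t) :=
  calc (3 ^ (p + t) * δ ^ p)⁻¹ = δ ^ t / (3 * δ) ^ (p + t) := by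
        rw [Real.mul_rpow (by norm_num) hδ.le, Real.rpow_add hδ]
        field_simp
    _ ≤ x ^ t / y ^ (p + t) :=
        div_le_div₀ (Real.rpow_nonneg (hδ.le.trans hx) t) (Real.rpow_le_rpow hδ.le hx ht)
          (by positivity) (Real.rpow_le_rpow hy.le hyδ (by linarith))

lemma measure_le_ofReal_mul_of_forall_inv_le {α : Type*} [MeasurableSpace α] {μ : Measure α}
    {E U : Set α} {f : α → ℝ≥0∞} {K M : ℝ} (hK : 0 < K) (hE : MeasurableSet E) (hEU : E ⊆ U)
    (hf : ∀ z ∈ E, ENNReal.ofReal K⁻¹ ≤ f z) (hM : ∫⁻ z in U, f z ∂μ ≤ ENNReal.ofReal M) :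
    μ E ≤ ENNReal.ofReal (K * M) := by
  have hKK : ENNReal.ofReal K * ENNReal.ofReal K⁻¹ = 1 := by
    rw [← ENNReal.ofReal_mul hK.le, mul_inv_cancel₀ hK.ne', ENNReal.ofReal_one]
  calc μ E = ENNReal.ofReal K * (ENNReal.ofReal K⁻¹ * μ E) := by rw [← mul_assoc, hKK, one_mul]
    _ = ENNReal.ofReal K * ∫⁻ _ in E, ENNReal.ofReal K⁻¹ ∂μ := by rw [setLIntegral_const]
    _ ≤ ENNReal.ofReal K * ∫⁻ z in U, f z ∂μ := by
        gcongr _ * ?_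
        exact (setLIntegral_mono' hE hf).trans (lintegral_mono_set hEU)
    _ ≤ ENNReal.ofReal (K * M) := by rw [ENNReal.ofReal_mul hK.le]; gcongr

theorem stmt1_general (n : ℕ) (s t : ℝ) (hs : 0 < s) (ht : 0 < t) :
    ∃ C : ℝ, 0 < C ∧
      ∀ (μ : Measure (Fin n → ℂ)), IsFiniteMeasure μ →
        ∀ M : ℝ, 0 ≤ M →
        (∀ a : Fin n → ℂ, eNorm a < 1 →
          ∫⁻ z in {z : Fin n → ℂ | eNorm z < 1},
              ENNReal.ofReal ((1 - eNorm a ^ 2) ^ t /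
                ‖1 - hInner a z‖ ^ ((n : ℝ) * s + t)) ∂μ
            ≤ ENNReal.ofReal M) →
        ∀ ζ : Fin n → ℂ, eNorm ζ = 1 → ∀ δ : ℝ, 0 < δ → δ ≤ 1 →
          μ {z | eNorm z < 1 ∧ ‖1 - hInner z ζ‖ < δ} ≤
            ENNReal.ofReal (C * M * δ ^ ((n : ℝ) * s)) := by
  refine ⟨3 ^ ((n : ℝ) * s + t), by positivity, ?_⟩
  intro μ _ M _ hM ζ hζ δ hδ hδ1
  set a : Fin n → ℂ := ((1 - δ : ℝ) : ℂ) • ζ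
  have ha : eNorm a = 1 - δ := by
    rw [eNorm_smul, hζ, mul_one, Complex.norm_real, Real.norm_of_nonneg (by linarith)]
  have hgap : δ ≤ 1 - eNorm a ^ 2 := by rw [ha]; nlinarith
  rw [mul_right_comm]
  refine measure_le_ofReal_mul_of_forall_inv_le (by positivity)
    (isOpen_setOf_eNorm_lt_one_and_norm_one_sub_hInner_lt ζ δ).measurableSet (fun z hz => hz.1)
    ?_ (hM a (by rw [ha]; linarith))
  rintro z ⟨-, hz⟩
  rw [norm_one_sub_hInner_ofReal_smul]
  exact ENNReal.ofReal_le_ofReal (inv_le_rpow_div_rpow hδ (by positivity) ht.le hgap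
    (norm_one_sub_mul_pos hδ hδ1 hz) (norm_one_sub_mul_le hδ hδ1 hz))

/-- If `μ` is a finite positive Borel measure on the unit ball of `ℂⁿ` with
`M := sup_a ∫ (1-|a|²)^t/|1-⟨a,z⟩|^{ns+t} dμ < ∞`, then there is `C = C(n,s,t)` with
`μ(B_δ(ζ)) ≤ C M δ^{ns}` for every unit vector `ζ` and every `δ ∈ (0,1]`. -/
theorem stmt1 (n : ℕ) (hn : 0 < n) (s t : ℝ) (hs : 0 < s) (ht : 0 < t) :
    ∃ C : ℝ, 0 < C ∧
      ∀ (μ : Measure (Fin n → ℂ)), IsFiniteMeasure μ →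
        ∀ M : ℝ, 0 ≤ M →
        (∀ a : Fin n → ℂ, eNorm a < 1 →
          ∫⁻ z in {z : Fin n → ℂ | eNorm z < 1},
              ENNReal.ofReal ((1 - eNorm a ^ 2) ^ t /
                ‖1 - hInner a z‖ ^ ((n : ℝ) * s + t)) ∂μ
            ≤ ENNReal.ofReal M) →
        ∀ ζ : Fin n → ℂ, eNorm ζ = 1 → ∀ δ : ℝ, 0 < δ → δ ≤ 1 →
          μ {z | eNorm z < 1 ∧ ‖1 - hInner z ζ‖ < δ} ≤
            ENNReal.ofReal (C * M * δ ^ ((n : ℝ) * s)) :=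
  stmt1_general n s t hs ht
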